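/- arXiv:2109.13291 — 5 statements merged into one kernel-verified Lean document; each statement's English description precedes it below -/
import Mathlib

section
/- For every α ∈ [0,1], |sin(π α / 2) − (3α − α³)/2| < 0.02002. -/
open Real

private lemma nonneg_of_deriv' (f f' : ℝ → ℝ) (hf : ∀ x, HasDerivAt f (f' x) x)
    (h0 : f 0 = 0) (hd : ∀ x, 0 ≤ x → 0 ≤ f' x) : ∀ x, 0 ≤ x → 0 ≤ f x := by
  intro x hx
  have hdiff : Differentiable ℝ f := fun y => (hf y).differentiableAt
  have hmono : MonotoneOn f (Set.Ici (0:ℝ)) :=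
    monotoneOn_of_deriv_nonneg (convex_Ici 0) hdiff.continuous.continuousOn
      (hdiff.differentiableOn)
      (fun y hy => by
        rw [(hf y).deriv]
        exact hd y (le_of_lt (by simpa using hy)))
  have := hmono (Set.self_mem_Ici) hx hx
  linarith [h0 ▸ this]

private lemma sin_ge3' : ∀ t : ℝ, 0 ≤ t → t - t^3/6 ≤ Real.sin t := by
  have h := nonneg_of_deriv' (fun t => Real.sin t - (t - t^3/6))
    (fun t => Real.cos t - (1 - t^2/2)) ?_ (by norm_num) ?_
  · intro t ht; linarith [h t ht]
  · intro x
    have : HasDerivAt (fun t : ℝ => Real.sin t - (t - t^3/6))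
        (Real.cos x - (1 - (3 * x^2)/6)) x := by
      exact (Real.hasDerivAt_sin x).sub ((hasDerivAt_id x).sub ((hasDerivAt_pow 3 x).div_const 6))
    convert this using 1; ring
  · intro x _; linarith [Real.one_sub_sq_div_two_le_cos (x := x)]

private lemma cos_le4' : ∀ t : ℝ, 0 ≤ t → Real.cos t ≤ 1 - t^2/2 + t^4/24 := by
  have h := nonneg_of_deriv' (fun t => 1 - t^2/2 + t^4/24 - Real.cos t)
    (fun t => -(t - t^3/6) + Real.sin t) ?_ (by norm_num) ?_
  · intro t ht; linarith [h t ht]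
  · intro x
    have : HasDerivAt (fun t : ℝ => 1 - t^2/2 + t^4/24 - Real.cos t)
        (0 - (2*x^1)/2 + (4*x^3)/24 - (-Real.sin x)) x := by
      exact ((((hasDerivAt_const x (1:ℝ)).sub ((hasDerivAt_pow 2 x).div_const 2)).add
        ((hasDerivAt_pow 4 x).div_const 24)).sub (Real.hasDerivAt_cos x))
    convert this using 1; ring
  · intro x hx; linarith [sin_ge3' x hx]

private lemma sin_le5' : ∀ t : ℝ, 0 ≤ t → Real.sin t ≤ t - t^3/6 + t^5/120 := by
  have h := nonneg_of_deriv' (fun t => t - t^3/6 + t^5/120 - Real.sin t)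
    (fun t => (1 - t^2/2 + t^4/24) - Real.cos t) ?_ (by norm_num) ?_
  · intro t ht; linarith [h t ht]
  · intro x
    have : HasDerivAt (fun t : ℝ => t - t^3/6 + t^5/120 - Real.sin t)
        (1 - (3*x^2)/6 + (5*x^4)/120 - Real.cos x) x := by
      exact (((hasDerivAt_id x).sub ((hasDerivAt_pow 3 x).div_const 6)).add
        ((hasDerivAt_pow 5 x).div_const 120)).sub (Real.hasDerivAt_sin x)
    convert this using 1; ring
  · intro x hx; linarith [cos_le4' x hx]

private lemma cos_ge6' : ∀ t : ℝ, 0 ≤ t → 1 - t^2/2 + t^4/24 - t^6/720 ≤ Real.cos t := by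
  have h := nonneg_of_deriv' (fun t => Real.cos t - (1 - t^2/2 + t^4/24 - t^6/720))
    (fun t => (t - t^3/6 + t^5/120) - Real.sin t) ?_ (by norm_num) ?_
  · intro t ht; linarith [h t ht]
  · intro x
    have : HasDerivAt (fun t : ℝ => Real.cos t - (1 - t^2/2 + t^4/24 - t^6/720))
        (-Real.sin x - (0 - (2*x^1)/2 + (4*x^3)/24 - (6*x^5)/720)) x := by
      exact (Real.hasDerivAt_cos x).sub ((((hasDerivAt_const x (1:ℝ)).sub
        ((hasDerivAt_pow 2 x).div_const 2)).add ((hasDerivAt_pow 4 x).div_const 24)).sub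
        ((hasDerivAt_pow 6 x).div_const 720))
    convert this using 1; ring
  · intro x hx; linarith [sin_le5' x hx]

private lemma sin_ge7' : ∀ t : ℝ, 0 ≤ t → t - t^3/6 + t^5/120 - t^7/5040 ≤ Real.sin t := by
  have h := nonneg_of_deriv' (fun t => Real.sin t - (t - t^3/6 + t^5/120 - t^7/5040))
    (fun t => Real.cos t - (1 - t^2/2 + t^4/24 - t^6/720)) ?_ (by norm_num) ?_
  · intro t ht; linarith [h t ht]
  · intro x
    have : HasDerivAt (fun t : ℝ => Real.sin t - (t - t^3/6 + t^5/120 - t^7/5040))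
        (Real.cos x - (1 - (3*x^2)/6 + (5*x^4)/120 - (7*x^6)/5040)) x := by
      exact (Real.hasDerivAt_sin x).sub ((((hasDerivAt_id x).sub
        ((hasDerivAt_pow 3 x).div_const 6)).add ((hasDerivAt_pow 5 x).div_const 120)).sub
        ((hasDerivAt_pow 7 x).div_const 5040))
    convert this using 1; ring
  · intro x hx; linarith [cos_ge6' x hx]

private lemma cos_le8' : ∀ t : ℝ, 0 ≤ t →
    Real.cos t ≤ 1 - t^2/2 + t^4/24 - t^6/720 + t^8/40320 := by
  have h := nonneg_of_deriv' (fun t => 1 - t^2/2 + t^4/24 - t^6/720 + t^8/40320 - Real.cos t)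
    (fun t => -(t - t^3/6 + t^5/120 - t^7/5040) + Real.sin t) ?_ (by norm_num) ?_
  · intro t ht; linarith [h t ht]
  · intro x
    have : HasDerivAt (fun t : ℝ => 1 - t^2/2 + t^4/24 - t^6/720 + t^8/40320 - Real.cos t)
        (0 - (2*x^1)/2 + (4*x^3)/24 - (6*x^5)/720 + (8*x^7)/40320 - (-Real.sin x)) x := by
      exact (((((hasDerivAt_const x (1:ℝ)).sub ((hasDerivAt_pow 2 x).div_const 2)).add
        ((hasDerivAt_pow 4 x).div_const 24)).sub ((hasDerivAt_pow 6 x).div_const 720)).add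
        ((hasDerivAt_pow 8 x).div_const 40320)).sub (Real.hasDerivAt_cos x)
    convert this using 1; ring
  · intro x hx; linarith [sin_ge7' x hx]

private lemma sin_le9' : ∀ t : ℝ, 0 ≤ t →
    Real.sin t ≤ t - t^3/6 + t^5/120 - t^7/5040 + t^9/362880 := by
  have h := nonneg_of_deriv'
    (fun t => t - t^3/6 + t^5/120 - t^7/5040 + t^9/362880 - Real.sin t)
    (fun t => (1 - t^2/2 + t^4/24 - t^6/720 + t^8/40320) - Real.cos t) ?_ (by norm_num) ?_
  · intro t ht; linarith [h t ht]
  · intro x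
    have : HasDerivAt
        (fun t : ℝ => t - t^3/6 + t^5/120 - t^7/5040 + t^9/362880 - Real.sin t)
        (1 - (3*x^2)/6 + (5*x^4)/120 - (7*x^6)/5040 + (9*x^8)/362880 - Real.cos x) x := by
      exact ((((hasDerivAt_id x).sub ((hasDerivAt_pow 3 x).div_const 6)).add
        ((hasDerivAt_pow 5 x).div_const 120)).sub ((hasDerivAt_pow 7 x).div_const 5040)).add
        ((hasDerivAt_pow 9 x).div_const 362880) |>.sub (Real.hasDerivAt_sin x)
    convert this using 1; ring
  · intro x hx; linarith [cos_le8' x hx]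

private lemma polyQ' (x : ℝ) (h0 : 0 ≤ x) (h1 : x ≤ 1) :
    (15707965/10000000 : ℝ) * x - (1570796/1000000:ℝ)^3/6 * x^3
      + (15707965/10000000:ℝ)^5/120 * x^5 - (1570796/1000000:ℝ)^7/5040 * x^7
      + (15707965/10000000:ℝ)^9/362880 * x^9 - (3*x - x^3)/2 < 0.02002 := by
  nlinarith [sq_nonneg (x - 0.44285), sq_nonneg (x*(x-0.44285)), sq_nonneg (x^2*(x-0.44285)),
    sq_nonneg (x^3*(x-0.44285)), mul_nonneg h0 (sub_nonneg.2 h1), sq_nonneg x, sq_nonneg (x^2),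
    mul_nonneg (mul_nonneg h0 h0) (sub_nonneg.2 h1), sq_nonneg (x^3), sq_nonneg (x^4)]

private lemma polyL' (x : ℝ) (h0 : 0 ≤ x) (h1 : x ≤ 1) :
    (-0.02002 : ℝ) < (1570796/1000000 : ℝ) * x - (15707965/10000000:ℝ)^3/6 * x^3
      + (1570796/1000000:ℝ)^5/120 * x^5 - (15707965/10000000:ℝ)^7/5040 * x^7
      - (3*x - x^3)/2 := by
  nlinarith [sq_nonneg (x - 0.44285), sq_nonneg (x*(x-0.44285)), sq_nonneg (x^2*(x-0.44285)),
    mul_nonneg h0 (sub_nonneg.2 h1), sq_nonneg x, sq_nonneg (x^2),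
    mul_nonneg (mul_nonneg h0 h0) (sub_nonneg.2 h1), sq_nonneg (x^3)]

theorem sin_cubic_approx (α : ℝ) (hα : α ∈ Set.Icc (0:ℝ) 1) :
    |Real.sin (π * α / 2) - (3 * α - α ^ 3) / 2| < 0.02002 := by
  obtain ⟨h0, h1⟩ := hα
  have hπl : (3.141592 : ℝ) < π := Real.pi_gt_d6
  have hπu : π < (3.141593 : ℝ) := Real.pi_lt_d6
  set t : ℝ := π * α / 2 with ht_def
  have ht0 : 0 ≤ t := by
    have := Real.pi_pos
    positivity
  have htu : t ≤ (15707965/10000000 : ℝ) * α := by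
    rw [ht_def]; nlinarith
  have htl : (1570796/1000000 : ℝ) * α ≤ t := by
    rw [ht_def]; nlinarith
  have hcl0 : (0:ℝ) ≤ (1570796/1000000 : ℝ) * α := by positivity
  have h3u : t^3 ≤ ((15707965/10000000 : ℝ) * α)^3 := pow_le_pow_left₀ ht0 htu 3
  have h5u : t^5 ≤ ((15707965/10000000 : ℝ) * α)^5 := pow_le_pow_left₀ ht0 htu 5
  have h7u : t^7 ≤ ((15707965/10000000 : ℝ) * α)^7 := pow_le_pow_left₀ ht0 htu 7
  have h9u : t^9 ≤ ((15707965/10000000 : ℝ) * α)^9 := pow_le_pow_left₀ ht0 htu 9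
  have h3l : ((1570796/1000000 : ℝ) * α)^3 ≤ t^3 := pow_le_pow_left₀ hcl0 htl 3
  have h5l : ((1570796/1000000 : ℝ) * α)^5 ≤ t^5 := pow_le_pow_left₀ hcl0 htl 5
  have h7l : ((1570796/1000000 : ℝ) * α)^7 ≤ t^7 := pow_le_pow_left₀ hcl0 htl 7
  rw [abs_lt]
  constructor
  · have hs := sin_ge7' t ht0
    have hp := polyL' α h0 h1
    nlinarith [hs, hp, htl, h3u, h5l, h7u]
  · have hs := sin_le9' t ht0
    have hp := polyQ' α h0 h1
    nlinarith [hs, hp, htu, h3l, h5u, h7l, h9u]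
end

section
/- For every α ∈ [0,1], sin(π α / 2) − (3α − α³)/2 ≥ 0; i.e., the cubic polynomial (3α − α³)/2 is a lower bound for sin(πα/2) on [0,1]. -/
open Real

theorem sin_cubic_lower_bound (α : ℝ) (hα : α ∈ Set.Icc (0:ℝ) 1) :
    Real.sin (π * α / 2) - (3 * α - α ^ 3) / 2 ≥ 0 := by
  obtain ⟨h0, h1⟩ := hα
  have pi_lb := Real.pi_gt_d6
  have pi_ub := Real.pi_lt_d6
  rcases le_or_gt α (12/25) with hc | hc
  · -- small α : use sin x ≥ x - x^3/6 - 5x^4/96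
    set x := π * α / 2 with hx
    have hx0 : 0 ≤ x := by positivity
    have hx1 : |x| ≤ 1 := by
      rw [abs_of_nonneg hx0, hx]
      nlinarith
    have hb := Real.sin_bound hx1
    rw [abs_of_nonneg hx0, abs_sub_le_iff] at hb
    have hb' : Real.sin x ≥ x - x ^ 3 / 6 - x ^ 4 * (5/96) := by nlinarith [hb.2, mul_le_mul_of_nonneg_right (abs_le.mp hx1).2 (pow_nonneg hx0 4), pow_nonneg hx0 4]
    rw [hx] at hb'
    have hπ2 : π ^ 2 ≤ 9.8696071 := by
      nlinarith [mul_le_mul pi_ub.le pi_ub.le Real.pi_pos.le (by norm_num : (0:ℝ) ≤ 3.141593)]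
    have hπ3 : π ^ 3 - 24 ≤ 7.0062886 := by
      nlinarith [mul_le_mul hπ2 pi_ub.le Real.pi_pos.le (by norm_num : (0:ℝ) ≤ 9.8696071)]
    have hπ4 : π ^ 4 ≤ 97.4091444 := by
      nlinarith [mul_le_mul hπ2 hπ2 (sq_nonneg π) (by norm_num : (0:ℝ) ≤ 9.8696071)]
    have hsq : α ^ 2 ≤ (12/25) * α := by nlinarith [mul_le_mul_of_nonneg_right hc h0]
    have h3 : α ^ 3 ≤ (12/25) ^ 2 * α := by nlinarith [mul_le_mul_of_nonneg_right hsq h0, mul_le_mul_of_nonneg_right hc h0]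
    have h4 : α ^ 4 ≤ (12/25) ^ 3 * α := by nlinarith [mul_le_mul hsq hsq (by positivity) (by positivity), mul_le_mul_of_nonneg_left hsq (by norm_num : (0:ℝ) ≤ 12/25)]
    have t3 : (π ^ 3 - 24) * α ^ 3 ≤ 7.0062886 * ((12/25) ^ 2 * α) :=
      mul_le_mul hπ3 h3 (by positivity) (by norm_num)
    have t4 : π ^ 4 * α ^ 4 ≤ 97.4091444 * ((12/25) ^ 3 * α) :=
      mul_le_mul hπ4 h4 (by positivity) (by norm_num)
    have tπα : 3.141592 * α ≤ π * α := mul_le_mul_of_nonneg_right pi_lb.le h0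
    nlinarith [hb', t3, t4, tπα]
  · -- large α : sin (πα/2) = cos (π(1-α)/2), use cos x ≥ 1 - x^2/2
    have key : Real.sin (π * α / 2) = Real.cos (π * (1 - α) / 2) := by
      rw [show π * α / 2 = π / 2 - π * (1 - α) / 2 from by ring, Real.sin_pi_div_two_sub]
    rw [key]
    have hb := Real.one_sub_sq_div_two_le_cos (x := π * (1 - α) / 2)
    have e : 1 - (π * (1 - α) / 2) ^ 2 / 2 - (3 * α - α ^ 3) / 2
        = (1 - α) ^ 2 * (3/2 - π ^ 2 / 8 - (1 - α) / 2) := by ring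
    have hpos : 0 ≤ (1 - α) ^ 2 * (3/2 - π ^ 2 / 8 - (1 - α) / 2) :=
      mul_nonneg (sq_nonneg _) (by nlinarith)
    linarith
end

section
/- Let σ = π(1 − 2δ_m) with δ_m ∈ [0, 1/2), and define Ψ(δ̃) = [tan(πδ_m)(sin(σδ̃) + σ sin²(πδ̃/2) − σδ̃) + cos(πδ̃) − cos(σδ̃)] / (2 − σ tan(πδ_m)). Then for every α ∈ [0,1], Ψ((1+α)/2) = −Ψ((1−α)/2). -/
open Real

theorem Psi_odd_symmetry (δm : ℝ) (hδm : δm ∈ Set.Ico (0:ℝ) (1/2))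
    (α : ℝ) (hα : α ∈ Set.Icc (0:ℝ) 1)
    (hden : 2 - π * (1 - 2 * δm) * Real.tan (π * δm) ≠ 0) :
    let σ : ℝ := π * (1 - 2 * δm)
    let Ψ : ℝ → ℝ := fun δt =>
      (Real.tan (π * δm) * (Real.sin (σ * δt) + σ * Real.sin (π * δt / 2) ^ 2 - σ * δt)
          + Real.cos (π * δt) - Real.cos (σ * δt)) / (2 - σ * Real.tan (π * δm))
    Ψ ((1 + α) / 2) = -Ψ ((1 - α) / 2) := by
  intro σ Ψ
  obtain ⟨h0, h1⟩ := hδm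
  have hA : Real.cos (π * δm) ≠ 0 := by
    have hpos : Real.cos (π * δm) > 0 := by
      apply Real.cos_pos_of_mem_Ioo
      constructor
      · nlinarith [Real.pi_pos]
      · nlinarith [Real.pi_pos]
    exact ne_of_gt hpos
  have key : Ψ ((1 + α) / 2) + Ψ ((1 - α) / 2) = 0 := by
    show (_ : ℝ) / _ + _ / _ = 0
    rw [← add_div, div_eq_zero_iff]
    left
    have e1 : σ * ((1 - α) / 2) = σ - σ * ((1 + α) / 2) := by ring
    have e2 : π * ((1 - α) / 2) = π - π * ((1 + α) / 2) := by ring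
    have e3 : (π - π * ((1 + α) / 2)) / 2 = π / 2 - π * ((1 + α) / 2) / 2 := by ring
    rw [e1, e2, e3, Real.sin_pi_div_two_sub, Real.cos_pi_sub, Real.sin_sub, Real.cos_sub]
    have hσ : σ = π - 2 * (π * δm) := by show π * (1 - 2 * δm) = _; ring
    have hσs : Real.sin σ = 2 * Real.sin (π * δm) * Real.cos (π * δm) := by
      rw [hσ, Real.sin_pi_sub, Real.sin_two_mul]
    have hσc : Real.cos σ = -(1 - 2 * Real.sin (π * δm) ^ 2) := by
      rw [hσ, Real.cos_pi_sub, Real.cos_two_mul]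
      linear_combination (-2 : ℝ) * Real.sin_sq_add_cos_sq (π * δm)
    rw [hσs, hσc, Real.tan_eq_sin_div_cos]
    field_simp
    ring_nf
    have hST : Real.sin (σ * (1 / 2) + σ * α * (1 / 2)) =
        Real.sin (π * (1 / 2) + (-(π * δm) - π * δm * α) + π * α * (1 / 2)) := by
      congr 1; show π * (1 - 2 * δm) * (1 / 2) + π * (1 - 2 * δm) * α * (1 / 2) = _; ring
    linear_combination (4 * Real.sin (π * δm) * (1 - Real.cos (π * δm) ^ 2 - Real.sin (π * δm) ^ 2)) * hST +
      (2 * π * Real.sin (π * δm) - 4 * π * δm * Real.sin (π * δm)) *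
        Real.sin_sq_add_cos_sq (π * (1 / 4) + π * α * (1 / 4)) +
      (-4 * Real.sin (π * δm) *
          Real.sin (π * (1 / 2) + (-(π * δm) - π * δm * α) + π * α * (1 / 2))) *
        Real.sin_sq_add_cos_sq (π * δm)
  linarith [key]
end

section
/- Let A, B be real matrices (A n×n, B n×m), W = Wᵀ > 0 an n×n matrix, X an m×n matrix, and α ≥ 0. If M := AW + BX satisfies M + Mᵀ + 2αW < 0 (negative definite), then every eigenvalue of A + BXW⁻¹ has real part strictly less than −α. -/
open Matrix

lemma posdef_map_re {n : ℕ} {N : Matrix (Fin n) (Fin n) ℝ} (hN : N.PosDef)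
    (v : Fin n → ℂ) (hv : v ≠ 0) :
    0 < (star v ⬝ᵥ (N.map (algebraMap ℝ ℂ)) *ᵥ v).re := by
  set x : Fin n → ℝ := fun i => (v i).re with hx
  set y : Fin n → ℝ := fun i => (v i).im with hy
  have hre : (star v ⬝ᵥ (N.map (algebraMap ℝ ℂ)) *ᵥ v).re = x ⬝ᵥ N *ᵥ x + y ⬝ᵥ N *ᵥ y := by
    simp only [dotProduct, mulVec, Complex.coe_algebraMap, map_apply, Pi.star_apply,
      RCLike.star_def, Finset.mul_sum, Complex.re_sum, Complex.mul_re, Complex.conj_re,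
      Complex.conj_im, Complex.ofReal_re, Complex.ofReal_im, Complex.mul_im]
    rw [← Finset.sum_add_distrib]
    refine Finset.sum_congr rfl fun i _ => ?_
    rw [← Finset.sum_add_distrib]
    refine Finset.sum_congr rfl fun j _ => ?_
    simp only [hx, hy]; ring
  rw [hre]
  have hxy : x ≠ 0 ∨ y ≠ 0 := by
    by_contra h
    push_neg at h
    exact hv (funext fun i => Complex.ext (congrFun h.1 i) (congrFun h.2 i))
  rcases hxy with h | h
  · have h1 := hN.dotProduct_mulVec_pos (x := x) (by simpa using h)
    have h2 := hN.posSemidef.dotProduct_mulVec_nonneg y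
    simp only [star_trivial] at h1 h2
    linarith [h1, h2]
  · have h1 := hN.posSemidef.dotProduct_mulVec_nonneg x
    have h2 := hN.dotProduct_mulVec_pos (x := y) (by simpa using h)
    simp only [star_trivial] at h1 h2
    linarith [h1, h2]

lemma dot_conjTranspose_self {n : ℕ} (M : Matrix (Fin n) (Fin n) ℂ) (u : Fin n → ℂ) :
    star u ⬝ᵥ Mᴴ *ᵥ u = star (star u ⬝ᵥ M *ᵥ u) := by
  calc star u ⬝ᵥ Mᴴ *ᵥ u = star u ⬝ᵥ Mᴴ *ᵥ u := rfl
    _ = star (star u ⬝ᵥ M *ᵥ u) := by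
        rw [eq_comm]
        calc star (star u ⬝ᵥ M *ᵥ u) = star (M *ᵥ u) ⬝ᵥ star (star u) :=
              (star_dotProduct_star _ _).symm
          _ = (star u ᵥ* Mᴴ) ⬝ᵥ u := by rw [star_star, star_mulVec]
          _ = star u ⬝ᵥ Mᴴ *ᵥ u := (dotProduct_mulVec _ _ _).symm

theorem alpha_stability_LMI {n m : ℕ}
    (A : Matrix (Fin n) (Fin n) ℝ) (B : Matrix (Fin n) (Fin m) ℝ)
    (W : Matrix (Fin n) (Fin n) ℝ) (X : Matrix (Fin m) (Fin n) ℝ) (α : ℝ)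
    (hα : 0 ≤ α) (hW : W.PosDef)
    (hLMI : (-(A * W + B * X + (A * W + B * X)ᵀ + (2 * α) • W)).PosDef) :
    ∀ μ ∈ spectrum ℂ ((A + B * X * W⁻¹).map (algebraMap ℝ ℂ)), μ.re < -α := by
  intro μ hμ
  set φ := algebraMap ℝ ℂ with hφ
  set P : Matrix (Fin n) (Fin n) ℝ := A * W + B * X with hP
  set Mc := (A + B * X * W⁻¹).map φ with hMcdef
  set Wc := W.map φ with hWcdef
  -- determinant facts
  have hWdet : IsUnit W.det := hW.det_pos.ne'.isUnit
  have hWcdet : IsUnit Wc.det := by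
    have hdet : Wc.det = φ W.det := by
      rw [hWcdef, ← RingHom.mapMatrix_apply, ← RingHom.map_det]
    rw [hdet]
    exact RingHom.isUnit_map φ hWdet
  -- eigenvector
  rw [spectrum.mem_iff] at hμ
  have hdet : ((algebraMap ℂ (Matrix (Fin n) (Fin n) ℂ)) μ - Mc).det = 0 := by
    by_contra h
    exact hμ ((Matrix.isUnit_iff_isUnit_det _).2 (Ne.isUnit h))
  obtain ⟨v, hv0, hv⟩ := (Matrix.exists_mulVec_eq_zero_iff).2 hdet
  have hvv : Mc *ᵥ v = μ • v := by
    have h1 : ((algebraMap ℂ (Matrix (Fin n) (Fin n) ℂ)) μ - Mc) *ᵥ v = 0 := hv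
    rw [sub_mulVec, Algebra.algebraMap_eq_smul_one, smul_mulVec, one_mulVec,
      sub_eq_zero] at h1
    exact h1.symm
  -- u with Wc * u = v
  set u := Wc⁻¹ *ᵥ v with hu
  have hWu : Wc *ᵥ u = v := by
    rw [hu, mulVec_mulVec, Matrix.mul_nonsing_inv _ hWcdet, one_mulVec]
  have hu0 : u ≠ 0 := by
    intro h
    apply hv0
    rw [← hWu, h, mulVec_zero]
  -- P mapped acts like Mc ∘ Wc
  have hMW : Mc * Wc = P.map φ := by
    rw [hMcdef, hWcdef, ← Matrix.map_mul, hP]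
    rw [add_mul, Matrix.mul_assoc, Matrix.nonsing_inv_mul _ hWdet, Matrix.mul_one]
  have hPu : (P.map φ) *ᵥ u = μ • v := by
    rw [← hMW, ← mulVec_mulVec, hWu, hvv]
  -- key scalar t
  set t : ℂ := star u ⬝ᵥ v with ht
  have htWc : star u ⬝ᵥ Wc *ᵥ u = t := by rw [hWu]
  have htre : 0 < t.re := by
    have := posdef_map_re hW u hu0
    rwa [← hWcdef, htWc] at this
  -- t is real : star t = t
  have hWcH : Wcᴴ = Wc := by
    rw [hWcdef]
    ext i j
    simp only [conjTranspose_apply, map_apply, hφ, Complex.coe_algebraMap, RCLike.star_def,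
      Complex.conj_ofReal, Complex.ofReal_inj]
    exact congrFun (congrFun (hW.isHermitian.eq) i) j
  have htstar : star t = t := by
    rw [← htWc, ← dot_conjTranspose_self, hWcH]
  -- entrywise facts about mapped matrices
  have hPcH : ((P.map φ))ᴴ = (P.map φ)ᵀ := by
    ext i j
    simp [conjTranspose_apply, map_apply, hφ, Complex.coe_algebraMap, Complex.conj_ofReal]
  have hsplit : ((P + Pᵀ + (2 * α) • W).map φ)
      = P.map φ + (P.map φ)ᵀ + ((2 * α : ℝ) : ℂ) • Wc := by
    ext i j
    simp [map_apply, transpose_apply, Matrix.add_apply, Matrix.smul_apply, hφ, hWcdef,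
      Complex.coe_algebraMap, smul_eq_mul]
  have hterm1 : star u ⬝ᵥ (P.map φ) *ᵥ u = μ * t := by
    rw [hPu, dotProduct_smul, ht, smul_eq_mul]
  have hterm2 : star u ⬝ᵥ (P.map φ)ᵀ *ᵥ u = (starRingEnd ℂ) μ * t := by
    rw [← hPcH, dot_conjTranspose_self, hterm1, star_mul', htstar]
    rfl
  have hterm3 : star u ⬝ᵥ (((2 * α : ℝ) : ℂ) • Wc) *ᵥ u = ((2 * α : ℝ) : ℂ) * t := by
    rw [smul_mulVec, dotProduct_smul, htWc, smul_eq_mul]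
  have hQ : (star u ⬝ᵥ ((P + Pᵀ + (2 * α) • W).map φ) *ᵥ u).re
      = (2 * μ.re + 2 * α) * t.re := by
    rw [hsplit, add_mulVec, add_mulVec, dotProduct_add, dotProduct_add,
      hterm1, hterm2, hterm3]
    have : μ * t + (starRingEnd ℂ) μ * t + ((2 * α : ℝ) : ℂ) * t
        = ((2 * μ.re + 2 * α : ℝ) : ℂ) * t := by
      rw [← add_mul, ← add_mul]
      congr 1
      rw [Complex.add_conj]
      push_cast
      ring
    rw [this, Complex.re_ofReal_mul]
  have hneg : ((-(P + Pᵀ + (2 * α) • W)).map φ) = -((P + Pᵀ + (2 * α) • W).map φ) := by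
    ext i j
    simp [map_apply, hφ]
  have hpos := posdef_map_re hLMI u hu0
  rw [hneg, neg_mulVec, dotProduct_neg, Complex.neg_re, hQ] at hpos
  nlinarith [htre, hpos]
end

section
/- Let A ∈ ℝ^{n×n}, W = Wᵀ > 0, and ρ > 0. If the block matrix [[−ρW, (AW)ᵀ], [AW, −ρW]] ≤ 0 (negative semidefinite), then every eigenvalue λ of A satisfies |λ| ≤ ρ. -/
open Matrix
open scoped ComplexOrder

lemma map_posSemidef_aux {n : ℕ} {M : Matrix (Fin n) (Fin n) ℝ} (hM : M.PosSemidef) :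
    (M.map (algebraMap ℝ ℂ)).PosSemidef := by
  obtain ⟨B, rfl⟩ : ∃ B : Matrix (Fin n) (Fin n) ℝ, M = Bᴴ * B := by
    open scoped MatrixOrder in exact CStarAlgebra.nonneg_iff_eq_star_mul_self.mp hM.nonneg
  have h := Matrix.map_mul (L := Bᴴ) (M := B) (f := algebraMap ℝ ℂ)
  rw [h, Matrix.conjTranspose_map (algebraMap ℝ ℂ)
    (fun x => by simp [Complex.conj_ofReal])]
  exact Matrix.posSemidef_conjTranspose_mul_self _

theorem disk_LMI_region {n : ℕ}
    (A W : Matrix (Fin n) (Fin n) ℝ) (ρ : ℝ) (hρ : 0 < ρ) (hW : W.PosDef)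
    (hLMI : (-(Matrix.fromBlocks (-(ρ • W)) (A * W)ᵀ (A * W) (-(ρ • W)))).PosSemidef) :
    ∀ μ ∈ spectrum ℂ (A.map (algebraMap ℝ ℂ)), ‖μ‖ ≤ ρ := by
  intro μ hμ
  -- Step 1: real Schur complement
  have hWsymm : Wᵀ = W := by
    rw [← Matrix.conjTranspose_eq_transpose_of_trivial]; exact hW.1
  have hWρ : (ρ • W).PosDef := by
    refine ⟨?_, fun x hx => ?_⟩
    · rw [Matrix.IsHermitian, Matrix.conjTranspose_smul, hW.1]; simp
    · exact (hW.smul hρ).2 hx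
  haveI : Invertible (ρ • W) :=
    (ρ • W).invertibleOfIsUnitDet (isUnit_iff_ne_zero.mpr hWρ.det_pos.ne')
  have hblocks : (Matrix.fromBlocks (ρ • W) (-(A * W)ᵀ) (-(A * W)ᵀ)ᴴ (ρ • W)).PosSemidef := by
    have h1 : (-(A * W)ᵀ)ᴴ = -(A * W) := by
      rw [Matrix.conjTranspose_neg, Matrix.conjTranspose_eq_transpose_of_trivial,
        Matrix.transpose_transpose]
    rw [h1]
    rw [Matrix.fromBlocks_neg] at hLMI
    simpa using hLMI
  have hschur := (Matrix.PosDef.fromBlocks₁₁ (-(A * W)ᵀ) (ρ • W) hWρ).mp hblocks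
  have hWdet : IsUnit W.det := isUnit_iff_ne_zero.mpr hW.det_pos.ne'
  have hkey : (-(A * W)ᵀ)ᴴ * (ρ • W)⁻¹ * (-(A * W)ᵀ) = ρ⁻¹ • (A * W * Aᵀ) := by
    have h1 : (-(A * W)ᵀ)ᴴ = -(A * W) := by
      rw [Matrix.conjTranspose_neg, Matrix.conjTranspose_eq_transpose_of_trivial,
        Matrix.transpose_transpose]
    have hinv : (ρ • W)⁻¹ = ρ⁻¹ • W⁻¹ := by
      refine Matrix.inv_eq_left_inv ?_
      rw [Matrix.smul_mul, Matrix.mul_smul, smul_smul, inv_mul_cancel₀ hρ.ne', one_smul,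
        Matrix.nonsing_inv_mul W hWdet]
    rw [h1, hinv]
    simp only [Matrix.neg_mul, Matrix.mul_neg, neg_neg]
    rw [Matrix.transpose_mul, hWsymm]
    rw [Matrix.mul_smul, Matrix.smul_mul]
    congr 1
    rw [Matrix.mul_assoc (A * W), Matrix.nonsing_inv_mul_cancel_left W _ hWdet, Matrix.mul_assoc]
  rw [hkey] at hschur
  -- Step 2: left eigenvector over ℂ
  set f := algebraMap ℝ ℂ with hf
  set Ac := A.map f with hAc
  set Wc := W.map f with hWc
  have hdet : (μ • (1 : Matrix (Fin n) (Fin n) ℂ) - Ac).det = 0 := by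
    rw [spectrum.mem_iff] at hμ
    by_contra h
    exact hμ (by
      have := (Matrix.isUnit_iff_isUnit_det _).mpr (isUnit_iff_ne_zero.mpr h)
      simpa [Algebra.algebraMap_eq_smul_one] using this)
  have hdetT : ((μ • (1 : Matrix (Fin n) (Fin n) ℂ) - Ac)ᵀ).det = 0 := by
    rw [Matrix.det_transpose]; exact hdet
  obtain ⟨u, hu0, huv⟩ := (Matrix.exists_mulVec_eq_zero_iff).mpr hdetT
  have hu : Acᵀ *ᵥ u = μ • u := by
    rw [Matrix.transpose_sub, Matrix.sub_mulVec, sub_eq_zero] at huv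
    rw [← huv, Matrix.transpose_smul, Matrix.transpose_one, Matrix.smul_mulVec,
      Matrix.one_mulVec]
  -- Step 3: complexified PSD inequality
  have hconj : ∀ x : ℝ, f (star x) = star (f x) := fun x => by
    simp [hf, Complex.conj_ofReal]
  have hmapS : (ρ • W - ρ⁻¹ • (A * W * Aᵀ)).map f
      = (ρ : ℂ) • Wc - (ρ⁻¹ : ℂ) • (Ac * Wc * Acᵀ) := by
    have h1 : (A * W * Aᵀ).map f = Ac * Wc * Acᵀ := by
      rw [Matrix.map_mul, Matrix.map_mul, Matrix.transpose_map]
    have hsub : ∀ M N : Matrix (Fin n) (Fin n) ℝ, (M - N).map f = M.map f - N.map f :=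
      fun M N => by ext i j; simp [hf]
    have hsmul : ∀ (c : ℝ) (M : Matrix (Fin n) (Fin n) ℝ),
        (c • M).map f = (c : ℂ) • M.map f := fun c M => by ext i j; simp [hf]
    rw [hsub, hsmul, hsmul, h1, Complex.ofReal_inv]
  have hSc := (map_posSemidef_aux hschur).dotProduct_mulVec_nonneg u
  rw [hmapS] at hSc
  set t := star u ⬝ᵥ (Wc *ᵥ u) with ht
  have hWc_psd : Wc.PosSemidef := map_posSemidef_aux hW.posSemidef
  have ht_pos : 0 < t := by
    refine (hWc_psd.dotProduct_mulVec_nonneg u).lt_of_ne' ?_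
    intro h0
    apply hu0
    have h1 : Wc *ᵥ u = 0 := (hWc_psd.dotProduct_mulVec_zero_iff u).mp h0
    have hWcdet : Wc.det ≠ 0 := by
      rw [hWc, ← RingHom.mapMatrix_apply, ← RingHom.map_det]
      simpa [hf] using hW.det_pos.ne'
    by_contra hne
    exact hWcdet (Matrix.exists_mulVec_eq_zero_iff.mp ⟨u, hne, h1⟩)
  -- Step 4: quadratic form computation
  have hAcH : Acᴴ = Acᵀ := by
    rw [hAc, ← Matrix.transpose_map, ← Matrix.conjTranspose_map f hconj,
      Matrix.conjTranspose_eq_transpose_of_trivial]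
  have h4 : (Acᵀ)ᴴ = Ac := by
    ext i j
    simp [hAc, Matrix.conjTranspose_apply, Matrix.transpose_apply, Matrix.map_apply,
      hf, Complex.conj_ofReal]
  have hcross : star u ⬝ᵥ ((Ac * Wc * Acᵀ) *ᵥ u) = (Complex.normSq μ : ℂ) * t := by
    rw [← Matrix.mulVec_mulVec, ← Matrix.mulVec_mulVec, hu, Matrix.mulVec_smul,
      Matrix.mulVec_smul, dotProduct_smul]
    have h3 : star u ᵥ* Ac = star (μ • u) := by
      rw [← hu, Matrix.star_mulVec, h4]
    have h2 : star u ⬝ᵥ (Ac *ᵥ (Wc *ᵥ u)) = (starRingEnd ℂ) μ * t := by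
      rw [Matrix.dotProduct_mulVec, h3]
      simp [ht, star_smul, Matrix.smul_vecMul, smul_dotProduct, smul_eq_mul,
        Matrix.dotProduct_mulVec]
    rw [h2, smul_eq_mul, ← mul_assoc, Complex.mul_conj]
  have hfinal : 0 ≤ ((ρ - ρ⁻¹ * Complex.normSq μ : ℝ) : ℂ) * t := by
    have : star u ⬝ᵥ (((ρ : ℂ) • Wc - (ρ⁻¹ : ℂ) • (Ac * Wc * Acᵀ)) *ᵥ u)
        = ((ρ - ρ⁻¹ * Complex.normSq μ : ℝ) : ℂ) * t := by
      rw [Matrix.sub_mulVec, dotProduct_sub, Matrix.smul_mulVec,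
        Matrix.smul_mulVec, dotProduct_smul, dotProduct_smul, hcross, ← ht]
      simp only [smul_eq_mul]
      push_cast
      ring
    rw [this] at hSc
    exact hSc
  have htre : 0 < t.re := (Complex.lt_def.mp ht_pos).1
  have htim : t.im = 0 := ((Complex.lt_def.mp ht_pos).2).symm
  have hre : 0 ≤ (ρ - ρ⁻¹ * Complex.normSq μ) * t.re := by
    have := (Complex.le_def.mp hfinal).1
    simpa [Complex.mul_re, htim] using this
  have hc : 0 ≤ ρ - ρ⁻¹ * Complex.normSq μ := by nlinarith [hre, htre]
  have hnsq : Complex.normSq μ ≤ ρ ^ 2 := by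
    have hρinv : 0 < ρ⁻¹ := inv_pos.mpr hρ
    nlinarith [mul_nonneg hc hρ.le, mul_inv_cancel₀ hρ.ne', Complex.normSq_nonneg μ]
  have habs : ‖μ‖ ^ 2 = Complex.normSq μ := Complex.sq_norm μ
  nlinarith [norm_nonneg μ, habs, hnsq, hρ]
end
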